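/- Let ρ₁ be the MCP with parameters γ = λ = 1, i.e., ρ₁(u) = |u| − u²/2 for |u| < 1 and ρ₁(u) = 1/2 for |u| ≥ 1, and let α > 0. If 0 ≤ x < min{α, 1}, then u = 0 is the unique minimizer of h(u) = ρ₁(u) + (1/(2α))(u − x)². -/
import Mathlib


/-- The MCP penalty with γ = λ = 1. -/
noncomputable def rho1 (u : ℝ) : ℝ := if |u| < 1 then |u| - u ^ 2 / 2 else 1 / 2

lemma prox_aux (α a b c : ℝ) (hα : 0 < α) (h : a < 2 * α * b + c) :
    (1 / (2 * α)) * a < b + (1 / (2 * α)) * c := by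
  have h2 : (0:ℝ) < 1 / (2 * α) := by positivity
  have h3 := mul_lt_mul_of_pos_left h h2
  have h4 : (1 / (2 * α)) * (2 * α * b + c) = b + (1 / (2 * α)) * c := by
    field_simp
  linarith

/-- If 0 ≤ x < min{α, 1}, then 0 is the unique minimizer of
h(u) = ρ₁(u) + (1/(2α))(u − x)². -/
theorem prox_rho1_zero_case (α x : ℝ) (hα : 0 < α) (hx0 : 0 ≤ x)
    (hx : x < min α 1) :
    ∀ u : ℝ, u ≠ 0 →
      rho1 0 + (1 / (2 * α)) * (0 - x) ^ 2
        < rho1 u + (1 / (2 * α)) * (u - x) ^ 2 := by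
  intro u hu
  have hxα : x < α := lt_of_lt_of_le hx (min_le_left _ _)
  have hx1 : x < 1 := lt_of_lt_of_le hx (min_le_right _ _)
  have hL : rho1 0 + (1 / (2 * α)) * (0 - x) ^ 2 = (1 / (2 * α)) * x ^ 2 := by
    unfold rho1; norm_num
  rw [hL]
  unfold rho1
  by_cases hu1 : |u| < 1
  · rw [if_pos hu1]
    apply prox_aux α _ _ _ hα
    rw [abs_lt] at hu1
    rcases lt_or_gt_of_ne hu with hneg | hpos
    · rw [abs_of_neg hneg]
      nlinarith [mul_pos hα (neg_pos.2 hneg), sq_nonneg u,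
        mul_nonneg hx0 (neg_nonneg.2 hneg.le),
        mul_pos (mul_pos hα (neg_pos.2 hneg)) (by linarith : (0:ℝ) < 2 + u)]
    · rw [abs_of_pos hpos]
      rcases le_or_gt α 1 with hα1 | hα1
      · nlinarith [mul_pos hpos (by linarith : (0:ℝ) < α - x),
          mul_nonneg (sq_nonneg u) (by linarith : (0:ℝ) ≤ 1 - α)]
      · nlinarith [mul_pos hpos (by linarith : (0:ℝ) < α - x),
          mul_pos hpos (mul_pos (by linarith : (0:ℝ) < 1 - u)
            (by linarith : (0:ℝ) < α - 1))]
  · rw [if_neg hu1]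
    apply prox_aux α _ _ _ hα
    push_neg at hu1
    have hx2 : x ^ 2 < α := by nlinarith
    nlinarith [sq_nonneg (u - x)]
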